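/- Let φ : [0,1] → [0,1] be continuous and suppose there are points 0 = a_0 < a_1 < a_2 < ⋯ with sup_k a_k = 1 such that, for every k ≥ 1, the interval I_k = [a_{k−1}, a_k] has length |I_k| = 6/(π² k²) and is partitioned into s_k = k^k subintervals of equal length on each of which φ is an affine bijection onto I_k. Then the lower and upper metric mean dimension of ([0,1], |·|, φ) are both equal to 1. -/

import Mathlib

open Filter Set Topology

noncomputable section

/-- `sep(n,φ,ε)`: the maximal cardinality of an `(n,φ,ε)`-separated set with respect to
the metric `d`, where a set `A` is `(n,φ,ε)`-separated if for all distinct `x, y ∈ A`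
one has `max_{0 ≤ i < n} d(φ^i x, φ^i y) > ε`. -/
def sepNum {X : Type*} (d : X → X → ℝ) (φ : X → X) (n : ℕ) (ε : ℝ) : ℕ :=
  sSup {m : ℕ | ∃ A : Finset X,
    (∀ x ∈ A, ∀ y ∈ A, x ≠ y → ∃ i < n, ε < d (φ^[i] x) (φ^[i] y)) ∧ A.card = m}

/-- `sep(φ,ε) = limsup_{n→∞} (1/n) log sep(n,φ,ε)`. -/
def sepExp {X : Type*} (d : X → X → ℝ) (φ : X → X) (ε : ℝ) : ℝ :=
  Filter.limsup (fun n : ℕ => Real.log (sepNum d φ n ε) / n) Filter.atTop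

/-- The lower metric mean dimension: `liminf_{ε→0⁺} sep(φ,ε)/|log ε|`. -/
def mdimLower {X : Type*} (d : X → X → ℝ) (φ : X → X) : ℝ :=
  Filter.liminf (fun ε : ℝ => sepExp d φ ε / |Real.log ε|) (nhdsWithin 0 (Set.Ioi 0))

/-- The upper metric mean dimension: `limsup_{ε→0⁺} sep(φ,ε)/|log ε|`. -/
def mdimUpper {X : Type*} (d : X → X → ℝ) (φ : X → X) : ℝ :=
  Filter.limsup (fun ε : ℝ => sepExp d φ ε / |Real.log ε|) (nhdsWithin 0 (Set.Ioi 0))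

/-- The metric `d(x,y) = |x - y|` on `[0,1]`. -/
def dI : unitInterval → unitInterval → ℝ := fun x y => |(x : ℝ) - (y : ℝ)|

/-- `φ` restricted to the `i`-th (0-indexed) of `s` equal-length closed subintervals of
`[u,v]` is an affine bijection onto `[u,v]`: on that subinterval `φ` is given by an affine
map `t ↦ c t + e` whose image of the subinterval is exactly `[u,v]`. -/
def AffineLeg (φ : unitInterval → unitInterval) (u v : ℝ) (s : ℕ) (i : ℕ) : Prop :=
  ∃ c e : ℝ,
    (∀ x : unitInterval,
      (x : ℝ) ∈ Set.Icc (u + (i : ℝ) * ((v - u) / (s : ℝ)))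
        (u + ((i : ℝ) + 1) * ((v - u) / (s : ℝ))) → (φ x : ℝ) = c * (x : ℝ) + e) ∧
    (fun t : ℝ => c * t + e) '' Set.Icc (u + (i : ℝ) * ((v - u) / (s : ℝ)))
        (u + ((i : ℝ) + 1) * ((v - u) / (s : ℝ))) = Set.Icc u v

/-!
Counting `ε`-boxes along orbit segments gives `sep(φ, ε) ≤ log (⌊1/ε⌋ + 1)`. Conversely, if the
legs of the `k`-th horseshoe have length `ℓ_k ≤ ε < ℓ_{k-1}`, following only legs about `ε / ℓ_k`
apart gives a full shift on about `|I_k| / ε` symbols whose orbits are `ε`-separated, so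
`sep(φ, ε) ≥ |log ε| - O(log k)`; and `|log ε| ≥ (k + 1) log (k - 1)` since
`ℓ_{k-1} ≤ (k - 1)^{-(k+1)}`. Divided by `|log ε|`, both bounds tend to `1`.
-/

open Real

def IsSepSet {X : Type*} (d : X → X → ℝ) (φ : X → X) (n : ℕ) (ε : ℝ) (A : Finset X) : Prop :=
  ∀ x ∈ A, ∀ y ∈ A, x ≠ y → ∃ i < n, ε < d (φ^[i] x) (φ^[i] y)

section SepNum

variable {X : Type*} {d : X → X → ℝ} {φ : X → X} {n N : ℕ} {ε : ℝ}

theorem sepNum_le_of_forall (h : ∀ A, IsSepSet d φ n ε A → A.card ≤ N) :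
    sepNum d φ n ε ≤ N :=
  csSup_le ⟨0, ∅, by simp, rfl⟩ (by rintro _ ⟨A, hA, rfl⟩; exact h A hA)

theorem IsSepSet.card_le_sepNum {A : Finset X} (hA : IsSepSet d φ n ε A)
    (h : ∀ B, IsSepSet d φ n ε B → B.card ≤ N) : A.card ≤ sepNum d φ n ε :=
  le_csSup ⟨N, by rintro _ ⟨B, hB, rfl⟩; exact h B hB⟩ ⟨A, hA, rfl⟩

end SepNum

theorem limsup_log_div_mem_Icc {x : ℕ → ℝ} {a b : ℝ} (ha : 1 ≤ a)
    (hx : ∀ n, a ^ n ≤ x n ∧ x n ≤ b ^ n) :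
    limsup (fun n : ℕ => log (x n) / n) atTop ∈ Icc (log a) (log b) := by
  have hbounds : ∀ᶠ n : ℕ in atTop, log (x n) / n ∈ Icc (log a) (log b) := by
    filter_upwards [eventually_ge_atTop 1] with n hn
    have hn' : (0 : ℝ) < n := by exact_mod_cast hn
    have hxpos : 0 < x n := (pow_pos (by linarith) n).trans_le (hx n).1
    rw [mem_Icc, le_div_iff₀ hn', div_le_iff₀ hn', mul_comm, mul_comm (log b), ← log_pow,
      ← log_pow]
    exact ⟨log_le_log (pow_pos (by linarith) n) (hx n).1,
      log_le_log hxpos (hx n).2⟩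
  exact ⟨le_limsup_of_frequently_le (hbounds.mono fun _ h => h.1).frequently
      (isBoundedUnder_of_eventually_le (hbounds.mono fun _ h => h.2)),
    limsup_le_of_le (isCoboundedUnder_le_of_eventually_le _ (hbounds.mono fun _ h => h.1))
      (hbounds.mono fun _ h => h.2)⟩

theorem abs_sub_lt_of_floor_div_eq {p q ε : ℝ} (hp : 0 ≤ p) (hq : 0 ≤ q) (hε : 0 < ε)
    (h : ⌊p / ε⌋₊ = ⌊q / ε⌋₊) : |p - q| < ε := by
  have hint : ⌊p / ε⌋ = ⌊q / ε⌋ := by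
    rw [← Int.natCast_floor_eq_floor (by positivity), ← Int.natCast_floor_eq_floor (by positivity),
      h]
  have := Int.abs_sub_lt_one_of_floor_eq_floor hint
  rwa [← sub_div, abs_div, abs_of_pos hε, div_lt_one hε] at this

section UnitInterval

variable {φ : unitInterval → unitInterval} {n : ℕ} {ε : ℝ}

/-- Box counting: the orbit segments of the points of a separated set visit pairwise distinct
sequences of the `⌊1/ε⌋₊ + 1` boxes `[jε, (j+1)ε)`. -/
theorem IsSepSet.card_le_unitInterval {A : Finset unitInterval} (hε : 0 < ε)
    (hA : IsSepSet dI φ n ε A) : A.card ≤ (⌊1 / ε⌋₊ + 1) ^ n := by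
  let box : unitInterval → Fin n → ℕ := fun x i => ⌊(φ^[i] x : ℝ) / ε⌋₊
  have hmaps : ∀ x ∈ A, box x ∈ Fintype.piFinset fun _ => Finset.range (⌊1 / ε⌋₊ + 1) :=
    fun x _ => Fintype.mem_piFinset.2 fun i => Finset.mem_range_succ_iff.2 <|
      Nat.floor_le_floor (div_le_div_of_nonneg_right (φ^[i] x).2.2 hε.le)
  have hinj : Set.InjOn box A := by
    intro x hx y hy hxy
    by_contra hne
    obtain ⟨i, hi, hlt⟩ := hA x hx y hy hne
    exact hlt.not_gt (abs_sub_lt_of_floor_div_eq (φ^[i] x).2.1 (φ^[i] y).2.1 hε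
      (congrFun hxy ⟨i, hi⟩))
  simpa using Finset.card_le_card_of_injOn box hmaps hinj

theorem one_le_sepNum (hε : 0 < ε) : 1 ≤ sepNum dI φ n ε :=
  (show IsSepSet dI φ n ε {0} by simp [IsSepSet]).card_le_sepNum
    fun _ hB => hB.card_le_unitInterval hε

theorem sepExp_mem_Icc (hε : 0 < ε) {m : ℕ} (hm : 1 ≤ m) (h : ∀ n, m ^ n ≤ sepNum dI φ n ε) :
    sepExp dI φ ε ∈ Icc (log m) (log (⌊1 / ε⌋₊ + 1)) :=
  limsup_log_div_mem_Icc (by exact_mod_cast hm) fun n =>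
    ⟨by exact_mod_cast h n,
      by exact_mod_cast sepNum_le_of_forall fun _ hA => hA.card_le_unitInterval hε⟩

theorem sepExp_nonneg (hε : 0 < ε) : 0 ≤ sepExp dI φ ε := by
  simpa using (sepExp_mem_Icc hε le_rfl fun n => (one_pow n).trans_le (one_le_sepNum hε)).1

theorem sepExp_div_abs_log_le (hε0 : 0 < ε) (hε1 : ε < 1) :
    sepExp dI φ ε / |log ε| ≤ 1 + log 2 / |log ε| := by
  have hlog : log ε < 0 := log_neg hε0 hε1
  have hL : 0 < |log ε| := abs_pos.2 hlog.ne
  have hbox : (⌊1 / ε⌋₊ : ℝ) + 1 ≤ 2 / ε := by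
    have h1 : 1 ≤ 1 / ε := by rw [le_div_iff₀ hε0]; linarith
    linarith [Nat.floor_le (zero_le_one.trans h1), show 2 / ε = 1 / ε + 1 / ε by ring]
  have hsep : sepExp dI φ ε ≤ log 2 + |log ε| :=
    calc sepExp dI φ ε ≤ log (⌊1 / ε⌋₊ + 1) :=
          (sepExp_mem_Icc hε0 le_rfl fun n => (one_pow n).trans_le (one_le_sepNum hε0)).2
      _ ≤ log (2 / ε) := log_le_log (by positivity) hbox
      _ = log 2 + |log ε| := by rw [log_div two_ne_zero hε0.ne', abs_of_neg hlog]; ring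
  rw [div_le_iff₀ hL, add_mul, one_mul, div_mul_cancel₀ _ hL.ne']
  linarith

end UnitInterval

def leg (u v : ℝ) (s j : ℕ) : Set ℝ :=
  Icc (u + (j : ℝ) * ((v - u) / (s : ℝ))) (u + ((j : ℝ) + 1) * ((v - u) / (s : ℝ)))

def IsAffineHorseshoe (φ : unitInterval → unitInterval) (u v : ℝ) (s : ℕ) : Prop :=
  ∀ i < s, AffineLeg φ u v s i

section Horseshoe

variable {u v : ℝ} {s : ℕ}

theorem leg_subset_Icc {j : ℕ} (huv : u ≤ v) (hj : j < s) : leg u v s j ⊆ Icc u v := by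
  intro x hx
  have hs : (0 : ℝ) < s := by exact_mod_cast (Nat.zero_le j).trans_lt hj
  have hℓ : 0 ≤ (v - u) / s := div_nonneg (sub_nonneg.2 huv) hs.le
  have hj' : (j : ℝ) + 1 ≤ s := by exact_mod_cast hj
  have hsℓ : (s : ℝ) * ((v - u) / s) = v - u := mul_div_cancel₀ _ hs.ne'
  have hlo := hx.1
  have hhi := hx.2
  constructor <;>
    nlinarith [mul_le_mul_of_nonneg_right hj' hℓ, mul_nonneg j.cast_nonneg hℓ]

theorem le_sub_of_mem_leg {i j Q : ℕ} {x y : ℝ} (hℓ : 0 ≤ (v - u) / s) (hij : i + Q ≤ j)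
    (hx : x ∈ leg u v s i) (hy : y ∈ leg u v s j) : ((Q : ℝ) - 1) * ((v - u) / s) ≤ y - x := by
  have hij' : (i : ℝ) + Q ≤ j := by exact_mod_cast hij
  have hlo := hx.2
  have hhi := hy.1
  nlinarith [mul_le_mul_of_nonneg_right hij' hℓ]

variable {φ : unitInterval → unitInterval}

theorem AffineLeg.exists_apply_eq {j : ℕ} (h : AffineLeg φ u v s j)
    (hleg : leg u v s j ⊆ Icc 0 1) {y : ℝ} (hy : y ∈ Icc u v) :
    ∃ x : unitInterval, (x : ℝ) ∈ leg u v s j ∧ (φ x : ℝ) = y := by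
  obtain ⟨c, e, hform, himage⟩ := h
  obtain ⟨t, ht, rfl⟩ : y ∈ (fun t => c * t + e) '' leg u v s j := himage ▸ hy
  exact ⟨⟨t, hleg ht⟩, ht, hform _ ht⟩

theorem IsAffineHorseshoe.exists_orbit (h : IsAffineHorseshoe φ u v s) (hu : 0 ≤ u)
    (hv : v ≤ 1) (huv : u ≤ v) (n : ℕ) (w : ℕ → ℕ) (hw : ∀ i, w i < s) :
    ∃ x : unitInterval, ∀ i ≤ n, (φ^[i] x : ℝ) ∈ leg u v s (w i) := by
  have hleg : ∀ j < s, leg u v s j ⊆ Icc 0 1 :=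
    fun j hj => (leg_subset_Icc huv hj).trans (Icc_subset_Icc hu hv)
  induction n generalizing w with
  | zero =>
    obtain ⟨x, hx, -⟩ := (h _ (hw 0)).exists_apply_eq (hleg _ (hw 0)) (left_mem_Icc.2 huv)
    exact ⟨x, fun i hi => by rwa [Nat.le_zero.1 hi]⟩
  | succ n ih =>
    obtain ⟨y, hy⟩ := ih (fun i => w (i + 1)) fun i => hw (i + 1)
    obtain ⟨x, hx, hxy⟩ := (h _ (hw 0)).exists_apply_eq (hleg _ (hw 0))
      (leg_subset_Icc huv (hw 1) (hy 0 n.zero_le))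
    refine ⟨x, fun i hi => ?_⟩
    cases i with
    | zero => exact hx
    | succ i =>
      rw [Function.iterate_succ_apply, Subtype.ext hxy]
      exact hy i (by omega)

/-- Following only every `Q`-th leg embeds the full shift on `m` symbols, with orbits that are
`ε`-apart as soon as the gap of `Q - 1` legs between the chosen ones exceeds `ε`. -/
theorem IsAffineHorseshoe.pow_le_sepNum (h : IsAffineHorseshoe φ u v s) (hu : 0 ≤ u)
    (hv : v ≤ 1) (huv : u ≤ v) {ε : ℝ} (hε : 0 < ε) {m Q : ℕ} (hmQ : m * Q ≤ s)
    (hQ : ε < ((Q : ℝ) - 1) * ((v - u) / s)) (n : ℕ) : m ^ n ≤ sepNum dI φ n ε := by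
  classical
  have hs : 0 < s := Nat.pos_of_ne_zero fun hs => by simp [hs] at hQ; linarith
  have hℓ : 0 ≤ (v - u) / s := div_nonneg (sub_nonneg.2 huv) s.cast_nonneg
  have hQpos : 0 < Q := Nat.pos_of_ne_zero fun hQ0 => by simp [hQ0] at hQ; linarith
  let code : (Fin n → Fin m) → ℕ → ℕ := fun w i => if hi : i < n then w ⟨i, hi⟩ * Q else 0
  have hcode : ∀ w (i : Fin n), code w i = w i * Q := fun w i => dif_pos i.2
  have hcode_lt : ∀ w i, code w i < s := by
    intro w i
    by_cases hi : i < n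
    · rw [hcode w ⟨i, hi⟩]
      exact (Nat.mul_lt_mul_of_pos_right (w ⟨i, hi⟩).2 hQpos).trans_le hmQ
    · simpa [code, hi] using hs
  choose x hx using fun w => h.exists_orbit hu hv huv n (code w) (hcode_lt w)
  have hfar : ∀ w w' (i : Fin n), (w i : ℕ) < w' i →
      ε < dI (φ^[i] (x w)) (φ^[i] (x w')) := by
    intro w w' i hlt
    have hgap := le_sub_of_mem_leg (Q := Q) hℓ (by nlinarith)
      (hcode w i ▸ hx w i i.2.le) (hcode w' i ▸ hx w' i i.2.le)
    exact hQ.trans_le (hgap.trans ((le_abs_self _).trans (abs_sub_comm _ _).le))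
  have hsep : ∀ w w', w ≠ w' → ∃ i < n, ε < dI (φ^[i] (x w)) (φ^[i] (x w')) := by
    intro w w' hne
    obtain ⟨i, hi⟩ := Function.ne_iff.1 hne
    refine ⟨i, i.2, ?_⟩
    rcases lt_or_gt_of_ne (Fin.val_ne_of_ne hi) with hlt | hlt
    · exact hfar w w' i hlt
    · rw [dI, abs_sub_comm]
      exact hfar w' w i hlt
  have hinj : Function.Injective x := fun w w' hxx => by
    by_contra hne
    obtain ⟨i, -, hi⟩ := hsep w w' hne
    simp [hxx, dI] at hi
    linarith
  have hA : IsSepSet dI φ n ε (Finset.univ.image x) := by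
    simp only [IsSepSet, Finset.mem_image, Finset.mem_univ, true_and]
    rintro _ ⟨w, rfl⟩ _ ⟨w', rfl⟩ hne
    exact hsep w w' fun h => hne (congrArg x h)
  calc m ^ n = (Finset.univ.image x).card := by
        rw [Finset.card_image_of_injective _ hinj]; simp
    _ ≤ sepNum dI φ n ε := hA.card_le_sepNum fun _ hB => hB.card_le_unitInterval hε

theorem IsAffineHorseshoe.log_le_sepExp (h : IsAffineHorseshoe φ u v s) (hu : 0 ≤ u)
    (hv : v ≤ 1) (huv : u < v) (hs : 0 < s) {ε : ℝ} (hε : 0 < ε) (hℓε : (v - u) / s ≤ ε) :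
    log ((v - u) / (6 * ε)) ≤ sepExp dI φ ε := by
  rcases lt_or_ge ((v - u) / (6 * ε)) 1 with hsmall | hbig
  · exact (log_neg (div_pos (sub_pos.2 huv) (by positivity)) hsmall).le.trans (sepExp_nonneg hε)
  set ℓ := (v - u) / s with hℓ_def
  have hs' : (0 : ℝ) < s := by exact_mod_cast hs
  have hℓ : 0 < ℓ := div_pos (sub_pos.2 huv) hs'
  set Q := ⌊ε / ℓ⌋₊ + 2
  have hQ : ε < ((Q : ℝ) - 1) * ℓ := by
    have := Nat.lt_floor_add_one (ε / ℓ)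
    rw [div_lt_iff₀ hℓ] at this
    push_cast [Q]
    linarith
  have hQle : (Q : ℝ) * ℓ ≤ 3 * ε := by
    have := Nat.floor_le (div_nonneg hε.le hℓ.le)
    rw [le_div_iff₀ hℓ] at this
    push_cast [Q]
    linarith
  have hQpos : (0 : ℝ) < Q := by positivity
  have hm : (v - u) / (6 * ε) ≤ (s / Q : ℕ) := by
    have hdiv : 2 * ((v - u) / (6 * ε)) ≤ (s : ℝ) / Q := by
      rw [le_div_iff₀ hQpos, show v - u = s * ℓ by rw [hℓ_def]; field_simp]
      rw [show 2 * (s * ℓ / (6 * ε)) * Q = s * (Q * ℓ) / (3 * ε) by ring,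
        div_le_iff₀ (by positivity)]
      exact mul_le_mul_of_nonneg_left hQle hs'.le
    have := Nat.sub_one_lt_floor ((s : ℝ) / Q)
    rw [Nat.floor_div_eq_div] at this
    linarith
  have hm1 : 1 ≤ s / Q := by exact_mod_cast hbig.trans hm
  exact (log_le_log (by linarith) hm).trans
    (sepExp_mem_Icc hε hm1 (h.pow_le_sepNum hu hv huv.le hε (Nat.div_mul_le_self s Q) hQ)).1

end Horseshoe

/-- The leg length `|I_k| / k ^ k` of the `k`-th horseshoe. -/
def legLength (k : ℕ) : ℝ := 6 / (π ^ 2 * (k : ℝ) ^ (k + 2))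

theorem legLength_le_inv_pow (k : ℕ) : legLength k ≤ ((k : ℝ) ^ (k + 2))⁻¹ := by
  have hπ : 6 ≤ π ^ 2 := by nlinarith [pi_gt_three]
  rw [legLength, ← div_div, ← one_div]
  exact div_le_div_of_nonneg_right ((div_le_one (by positivity)).2 hπ) (by positivity)

theorem tendsto_legLength_atTop : Tendsto legLength atTop (𝓝 0) := by
  have hpow : Tendsto (fun k : ℕ => (k : ℝ) ^ (k + 2)) atTop atTop :=
    tendsto_atTop_mono (fun k => by exact_mod_cast Nat.le_self_pow (by omega) k)
      tendsto_natCast_atTop_atTop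
  exact squeeze_zero (fun k => by unfold legLength; positivity) legLength_le_inv_pow
    hpow.inv_tendsto_atTop

theorem exists_legLength_succ_le_lt {ε : ℝ} {k₀ : ℕ} (hε : 0 < ε) (h : ε < legLength k₀) :
    ∃ k ≥ k₀, legLength (k + 1) ≤ ε ∧ ε < legLength k := by
  classical
  have hex : ∃ j, legLength (k₀ + j + 1) ≤ ε := by
    obtain ⟨N, hN⟩ := eventually_atTop.1 (tendsto_legLength_atTop.eventually (ge_mem_nhds hε))
    exact ⟨N, hN _ (by omega)⟩
  refine ⟨k₀ + Nat.find hex, Nat.le_add_right _ _, Nat.find_spec hex, ?_⟩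
  rcases Nat.eq_zero_or_pos (Nat.find hex) with h0 | hpos
  · simpa [h0] using h
  · have := not_le.1 (Nat.find_min hex (Nat.sub_lt hpos one_pos))
    rwa [show k₀ + (Nat.find hex - 1) + 1 = k₀ + Nat.find hex by omega] at this

theorem mul_log_le_neg_log_of_lt_legLength {ε : ℝ} {k : ℕ} (hε0 : 0 < ε)
    (hε : ε < legLength k) : (k + 2) * log k ≤ -log ε := by
  have := log_lt_log hε0 (hε.trans_le (legLength_le_inv_pow k))
  rw [log_inv, log_pow] at this
  push_cast at this
  linarith

def HasKKHorseshoes (φ : unitInterval → unitInterval) : Prop :=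
  ∀ k : ℕ, 1 ≤ k → ∃ u v : ℝ, 0 ≤ u ∧ v ≤ 1 ∧ v - u = 6 / (π ^ 2 * (k : ℝ) ^ 2) ∧
    IsAffineHorseshoe φ u v (k ^ k)

namespace HasKKHorseshoes

variable {φ : unitInterval → unitInterval} {ε : ℝ} {k : ℕ}

theorem neg_log_sub_le_sepExp (h : HasKKHorseshoes φ) (hk : 2 ≤ k) (hε0 : 0 < ε)
    (hε : legLength (k + 1) ≤ ε) : -log ε - 8 * log k ≤ sepExp dI φ ε := by
  obtain ⟨u, v, hu, hv, hlen, hshoe⟩ := h (k + 1) (by omega)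
  have hk' : (2 : ℝ) ≤ k := by exact_mod_cast hk
  have hleg : (v - u) / ((k + 1) ^ (k + 1) : ℕ) = legLength (k + 1) := by
    rw [hlen, legLength]; push_cast; field_simp; ring
  have huv : u < v := by rw [← sub_pos, hlen]; positivity
  have hsep := hshoe.log_le_sepExp hu hv huv (by positivity) hε0 (hleg ▸ hε)
  have hsmall : ((k : ℝ) ^ 8)⁻¹ ≤ (v - u) / 6 := by
    have hπ : π ^ 2 ≤ 10 := by nlinarith [pi_lt_d2, pi_pos]
    have hk6 : (2 : ℝ) ^ 6 ≤ k ^ 6 := pow_le_pow_left₀ (by norm_num) hk' 6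
    rw [hlen, show 6 / (π ^ 2 * ((k + 1 : ℕ) : ℝ) ^ 2) / 6 = (π ^ 2 * ((k : ℝ) + 1) ^ 2)⁻¹ by
      push_cast; field_simp]
    apply inv_anti₀ (by positivity)
    nlinarith [mul_le_mul_of_nonneg_right hk6 (sq_nonneg (k : ℝ)),
      mul_le_mul_of_nonneg_right hπ (sq_nonneg ((k : ℝ) + 1))]
  calc -log ε - 8 * log k = log ((k : ℝ) ^ 8)⁻¹ - log ε := by
        rw [log_inv, log_pow]; push_cast; ring
    _ ≤ log ((v - u) / 6) - log ε := by gcongr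
    _ = log ((v - u) / (6 * ε)) := by
      rw [← log_div (by positivity) hε0.ne', div_div]
    _ ≤ sepExp dI φ ε := hsep

theorem one_sub_le_sepExp_div_abs_log (h : HasKKHorseshoes φ) (hk : 2 ≤ k) (hε0 : 0 < ε)
    (hε₁ : legLength (k + 1) ≤ ε) (hε₂ : ε < legLength k) :
    1 - 8 / (k + 2) ≤ sepExp dI φ ε / |log ε| := by
  have hlog := mul_log_le_neg_log_of_lt_legLength hε0 hε₂
  have hsep := h.neg_log_sub_le_sepExp hk hε0 hε₁
  have hlogk : 0 < log k := log_pos (by exact_mod_cast hk)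
  have hL : 0 < -log ε := by nlinarith
  rw [abs_of_neg (neg_pos.1 hL), le_div_iff₀ hL]
  have : 8 * log k ≤ 8 / (k + 2) * -log ε := by
    rw [div_mul_eq_mul_div, le_div_iff₀ (by positivity)]
    nlinarith
  linarith

theorem tendsto_sepExp_div_abs_log (h : HasKKHorseshoes φ) :
    Tendsto (fun ε => sepExp dI φ ε / |log ε|) (𝓝[>] 0) (𝓝 1) := by
  have habs : Tendsto (fun ε => |log ε|) (𝓝[>] 0) atTop :=
    tendsto_abs_atBot_atTop.comp tendsto_log_nhdsGT_zero
  have hupper : Tendsto (fun ε => 1 + log 2 / |log ε|) (𝓝[>] 0) (𝓝 1) := by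
    simpa using tendsto_const_nhds.add (habs.const_div_atTop (log 2))
  refine tendsto_order.2 ⟨fun b hb => ?_, fun b hb => ?_⟩
  · obtain ⟨N, hN⟩ := exists_nat_gt (8 / (1 - b))
    have hk₀ : b < 1 - 8 / ((N + 2 : ℕ) + 2) := by
      rw [div_lt_iff₀ (sub_pos.2 hb)] at hN
      rw [lt_sub_comm, div_lt_iff₀ (by positivity)]
      push_cast
      nlinarith
    filter_upwards [Ioo_mem_nhdsGT (by unfold legLength; positivity : 0 < legLength (N + 2))]
      with ε ⟨hε0, hε⟩
    obtain ⟨k, hk, hε₁, hε₂⟩ := exists_legLength_succ_le_lt hε0 hε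
    calc b < 1 - 8 / ((N + 2 : ℕ) + 2) := hk₀
      _ ≤ 1 - 8 / (k + 2) := by gcongr
      _ ≤ _ := h.one_sub_le_sepExp_div_abs_log (by omega) hε0 hε₁ hε₂
  · filter_upwards [hupper.eventually (gt_mem_nhds hb), Ioo_mem_nhdsGT one_pos]
      with ε hlt ⟨hε0, hε1⟩
    exact (sepExp_div_abs_log_le hε0 hε1).trans_lt hlt

end HasKKHorseshoes

theorem mdim_eq_one_of_kk_horseshoes_general (φ : unitInterval → unitInterval)
    (a : ℕ → ℝ) (ha0 : a 0 = 0) (hmono : StrictMono a)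
    (hsup : (⨆ k, a k) = 1)
    (hlen : ∀ k : ℕ, 1 ≤ k → a k - a (k - 1) = 6 / (Real.pi ^ 2 * (k : ℝ) ^ 2))
    (haff : ∀ k : ℕ, 1 ≤ k → ∀ i < k ^ k, AffineLeg φ (a (k - 1)) (a k) (k ^ k) i) :
    mdimLower dI φ = 1 ∧ mdimUpper dI φ = 1 := by
  have hbdd : BddAbove (range a) := by
    by_contra h
    rw [Real.iSup_of_not_bddAbove h] at hsup
    exact zero_ne_one hsup
  have hshoes : HasKKHorseshoes φ := fun k hk =>
    ⟨a (k - 1), a k, ha0 ▸ hmono.monotone (Nat.zero_le _), hsup ▸ le_ciSup hbdd k, hlen k hk,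
      haff k hk⟩
  have hlim := hshoes.tendsto_sepExp_div_abs_log
  exact ⟨hlim.liminf_eq, hlim.limsup_eq⟩

/-- If `I_k = [a_{k-1}, a_k]` has length `6/(π² k²)` and is a full affine horseshoe for `φ`
with `k^k` equal legs, for every `k ≥ 1`, then both metric mean dimensions equal `1`. -/
theorem mdim_eq_one_of_kk_horseshoes (φ : unitInterval → unitInterval)
    (hφ : Continuous φ) (a : ℕ → ℝ) (ha0 : a 0 = 0) (hmono : StrictMono a)
    (hsup : (⨆ k, a k) = 1)
    (hlen : ∀ k : ℕ, 1 ≤ k → a k - a (k - 1) = 6 / (Real.pi ^ 2 * (k : ℝ) ^ 2))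
    (haff : ∀ k : ℕ, 1 ≤ k → ∀ i < k ^ k, AffineLeg φ (a (k - 1)) (a k) (k ^ k) i) :
    mdimLower dI φ = 1 ∧ mdimUpper dI φ = 1 :=
  mdim_eq_one_of_kk_horseshoes_general φ a ha0 hmono hsup hlen haff
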